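/- arXiv:1809.01416 — 6 statements merged into one kernel-verified Lean document; each statement's English description precedes it below -/
import Mathlib

section
/- Let A be the complex de Rham algebra of an almost complex manifold with differential d = μ̄ + ∂̄ + ∂ + μ. Define the Hodge filtration F^p A^n := (Ker μ̄ ∩ A^{p,n-p}) ⊕ ⊕_{i>p} A^{i,n-i}. Then F is a decreasing filtration compatible with d, i.e., d(F^p A^n) ⊆ F^p A^{n+1} for all p, n, and moreover F^{n+1}A^n = 0 and F^0 A^n = A^n. -/
/-- The Hodge filtration `F^p A^n := (Ker μ̄ ∩ A^{p,n-p}) ⊕ ⊕_{i>p} A^{i,n-i}` of the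
complex de Rham algebra of an almost complex manifold is a decreasing filtration compatible
with `d`, with `F^{n+1} A^n = 0` and `F^0 A^n = A^n`. -/
theorem stmt_2 {V : Type*} [AddCommGroup V] [Module ℂ V]
    (A : ℤ × ℤ → Submodule ℂ V) (hA : DirectSum.IsInternal A)
    (hpos : ∀ p q : ℤ, p < 0 ∨ q < 0 → A (p, q) = ⊥)
    (mub delb del mu : Module.End ℂ V)
    (hmub : ∀ p q : ℤ, (A (p, q)).map mub ≤ A (p - 1, q + 2))
    (hdelb : ∀ p q : ℤ, (A (p, q)).map delb ≤ A (p, q + 1))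
    (hdel : ∀ p q : ℤ, (A (p, q)).map del ≤ A (p + 1, q))
    (hmu : ∀ p q : ℤ, (A (p, q)).map mu ≤ A (p + 2, q - 1))
    (h1 : mub * mub = 0)
    (h2 : delb * mub + mub * delb = 0) :
    let d : Module.End ℂ V := mub + delb + del + mu
    let F : ℤ → ℤ → Submodule ℂ V := fun p n =>
      (LinearMap.ker mub ⊓ A (p, n - p)) ⊔ ⨆ i > p, A (i, n - i)
    (∀ p n : ℤ, F (p + 1) n ≤ F p n) ∧
    (∀ p n : ℤ, (F p n).map d ≤ F p (n + 1)) ∧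
    (∀ n : ℤ, F (n + 1) n = ⊥) ∧
    (∀ n : ℤ, F 0 n = ⨆ i : ℤ, A (i, n - i)) := by
  intro d F
  have hdx : ∀ x : V, d x = mub x + delb x + del x + mu x := by
    intro x; simp [d, LinearMap.add_apply]
  have hAmem : ∀ (i j i' j' : ℤ) (x : V), i = i' → j = j' → x ∈ A (i, j) → x ∈ A (i', j') := by
    rintro i j i' j' x rfl rfl hx; exact hx
  refine ⟨?_, ?_, ?_, ?_⟩
  · -- decreasing
    intro p n
    apply sup_le
    · refine le_trans inf_le_right (le_sup_of_le_right ?_)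
      exact le_iSup_of_le (p + 1) (le_iSup_of_le (lt_add_one p) le_rfl)
    · refine le_sup_of_le_right ?_
      refine iSup_le fun i => iSup_le fun hi => ?_
      exact le_iSup_of_le i (le_iSup_of_le (by omega) le_rfl)
  · -- compatibility with d
    intro p n
    rw [Submodule.map_le_iff_le_comap]
    apply sup_le
    · intro x hx
      obtain ⟨hk, hxA⟩ := Submodule.mem_inf.mp hx
      have hmubx : mub x = 0 := hk
      have hdb : delb x ∈ A (p, n + 1 - p) := by
        refine hAmem _ _ _ _ _ rfl (by ring) (hdelb p (n - p) ⟨x, hxA, rfl⟩)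
      have hdbk : mub (delb x) = 0 := by
        have := LinearMap.congr_fun h2 x
        simp only [LinearMap.add_apply, Module.End.mul_apply, LinearMap.zero_apply,
          hmubx, map_zero, zero_add] at this
        exact this
      have hdl : del x ∈ A (p + 1, n + 1 - (p + 1)) := by
        refine hAmem _ _ _ _ _ rfl (by ring) (hdel p (n - p) ⟨x, hxA, rfl⟩)
      have hm : mu x ∈ A (p + 2, n + 1 - (p + 2)) := by
        refine hAmem _ _ _ _ _ rfl (by ring) (hmu p (n - p) ⟨x, hxA, rfl⟩)
      show d x ∈ F p (n + 1)
      rw [hdx x, hmubx, zero_add]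
      refine add_mem (add_mem ?_ ?_) ?_
      · exact Submodule.mem_sup_left (Submodule.mem_inf.mpr ⟨hdbk, hdb⟩)
      · exact Submodule.mem_sup_right
          (Submodule.mem_iSup_of_mem (p + 1) (Submodule.mem_iSup_of_mem (lt_add_one p) hdl))
      · exact Submodule.mem_sup_right
          (Submodule.mem_iSup_of_mem (p + 2) (Submodule.mem_iSup_of_mem (by omega) hm))
    · refine iSup_le fun i => iSup_le fun hi => ?_
      intro x hxA
      have hdb : delb x ∈ A (i, n + 1 - i) := by
        refine hAmem _ _ _ _ _ rfl (by ring) (hdelb i (n - i) ⟨x, hxA, rfl⟩)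
      have hdl : del x ∈ A (i + 1, n + 1 - (i + 1)) := by
        refine hAmem _ _ _ _ _ rfl (by ring) (hdel i (n - i) ⟨x, hxA, rfl⟩)
      have hm : mu x ∈ A (i + 2, n + 1 - (i + 2)) := by
        refine hAmem _ _ _ _ _ rfl (by ring) (hmu i (n - i) ⟨x, hxA, rfl⟩)
      have hmb : mub x ∈ A (i - 1, n + 1 - (i - 1)) := by
        refine hAmem _ _ _ _ _ rfl (by ring) (hmub i (n - i) ⟨x, hxA, rfl⟩)
      show d x ∈ F p (n + 1)
      have hmub_mem : mub x ∈ F p (n + 1) := by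
        rcases eq_or_lt_of_le (Int.add_one_le_of_lt hi) with h | h
        · -- i = p + 1, so mub x lands in A (p, n+1-p) and is in ker mub
          have hk : mub (mub x) = 0 := by
            have := LinearMap.congr_fun h1 x
            simpa [Module.End.mul_apply] using this
          refine Submodule.mem_sup_left (Submodule.mem_inf.mpr ⟨hk, ?_⟩)
          exact hAmem _ _ _ _ _ (by omega) (by omega) hmb
        · exact Submodule.mem_sup_right
            (Submodule.mem_iSup_of_mem (i - 1) (Submodule.mem_iSup_of_mem (by omega) hmb))
      rw [hdx x]
      refine add_mem (add_mem (add_mem hmub_mem ?_) ?_) ?_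
      · exact Submodule.mem_sup_right
          (Submodule.mem_iSup_of_mem i (Submodule.mem_iSup_of_mem hi hdb))
      · exact Submodule.mem_sup_right
          (Submodule.mem_iSup_of_mem (i + 1) (Submodule.mem_iSup_of_mem (by omega) hdl))
      · exact Submodule.mem_sup_right
          (Submodule.mem_iSup_of_mem (i + 2) (Submodule.mem_iSup_of_mem (by omega) hm))
  · -- F^{n+1} A^n = 0
    intro n
    rw [le_bot_iff.symm]
    apply sup_le
    · rw [hpos (n + 1) (n - (n + 1)) (Or.inr (by omega))]
      exact inf_le_right
    · refine iSup_le fun i => iSup_le fun hi => ?_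
      rw [hpos i (n - i) (Or.inr (by omega))]
  · -- F^0 A^n = A^n
    intro n
    apply le_antisymm
    · apply sup_le
      · exact le_trans inf_le_right (le_iSup (fun i => A (i, n - i)) 0)
      · exact iSup_le fun i => iSup_le fun _ => le_iSup (fun i => A (i, n - i)) i
    · refine iSup_le fun i => ?_
      rcases lt_trichotomy i 0 with h | h | h
      · rw [hpos i (n - i) (Or.inl h)]; exact bot_le
      · subst h
        intro x hx
        have hk : mub x = 0 := by
          have : mub x ∈ A ((0 : ℤ) - 1, n - 0 + 2) := hmub 0 (n - 0) ⟨x, hx, rfl⟩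
          rwa [hpos _ _ (Or.inl (by omega)), Submodule.mem_bot] at this
        exact Submodule.mem_sup_left (Submodule.mem_inf.mpr ⟨hk, hx⟩)
      · exact fun x hx => Submodule.mem_sup_right
          (Submodule.mem_iSup_of_mem i (Submodule.mem_iSup_of_mem h hx))
end

section
/- With the notation above, the shifted Hodge filtration F̃^p A^n := ⊕_{i ≥ p-n} A^{i,n-i} is a decreasing filtration compatible with d (d(F̃^p A^n) ⊆ F̃^p A^{n+1}), and the Hodge filtration F is the Deligne décalage of F̃: F^p A^n = { ω ∈ F̃^{p+n} A^n : dω ∈ F̃^{p+n+1} A^{n+1} }. -/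
section aux
variable {R : Type*} [CommRing R] {V : Type*} [AddCommGroup V] [Module R V]
  {ι : Type*} [DecidableEq ι]
  (A : ι → Submodule R V) (hA : DirectSum.IsInternal A)

/-- Projection onto the `j`-th component of an internal direct sum. -/
noncomputable def dsProj (j : ι) : V →ₗ[R] V :=
  (A j).subtype ∘ₗ (DirectSum.component R ι (fun i => A i) j) ∘ₗ
    (LinearEquiv.ofBijective (DirectSum.coeLinearMap A) hA).symm.toLinearMap

lemma dsProj_apply_same (j : ι) {x : V} (hx : x ∈ A j) : dsProj A hA j x = x := by
  have h := hA.ofBijective_coeLinearMap_of_mem hx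
  show (((LinearEquiv.ofBijective (DirectSum.coeLinearMap A) hA).symm x) j : V) = x
  rw [h]

lemma dsProj_apply_ne {i j : ι} (hij : i ≠ j) {x : V} (hx : x ∈ A i) :
    dsProj A hA j x = 0 := by
  have h := hA.ofBijective_coeLinearMap_of_mem_ne hij hx
  show (((LinearEquiv.ofBijective (DirectSum.coeLinearMap A) hA).symm x) j : V) = 0
  rw [h]; rfl

lemma dsProj_eq_zero_of_mem_biSup {κ : Type*} (j : ι) (s : κ → Prop) (g : κ → ι)
    (hs : ∀ i, s i → g i ≠ j)
    {x : V} (hx : x ∈ ⨆ i, ⨆ (_ : s i), A (g i)) : dsProj A hA j x = 0 := by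
  have h : (⨆ i, ⨆ (_ : s i), A (g i)) ≤ LinearMap.ker (dsProj A hA j) := by
    refine iSup₂_le fun i hi => fun y hy => ?_
    exact LinearMap.mem_ker.mpr (dsProj_apply_ne A hA (hs i hi) hy)
  exact h hx

end aux

/-- The shifted Hodge filtration `F̃^p A^n := ⊕_{i ≥ p-n} A^{i,n-i}` is a decreasing
filtration compatible with `d`, and the Hodge filtration `F` is its Deligne décalage:
`F^p A^n = {ω ∈ F̃^{p+n} A^n : dω ∈ F̃^{p+n+1} A^{n+1}}`. -/
theorem stmt_3 {V : Type*} [AddCommGroup V] [Module ℂ V]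
    (A : ℤ × ℤ → Submodule ℂ V) (hA : DirectSum.IsInternal A)
    (hpos : ∀ p q : ℤ, p < 0 ∨ q < 0 → A (p, q) = ⊥)
    (mub delb del mu : Module.End ℂ V)
    (hmub : ∀ p q : ℤ, (A (p, q)).map mub ≤ A (p - 1, q + 2))
    (hdelb : ∀ p q : ℤ, (A (p, q)).map delb ≤ A (p, q + 1))
    (hdel : ∀ p q : ℤ, (A (p, q)).map del ≤ A (p + 1, q))
    (hmu : ∀ p q : ℤ, (A (p, q)).map mu ≤ A (p + 2, q - 1))
    (h1 : mub * mub = 0)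
    (h2 : delb * mub + mub * delb = 0) :
    let d : Module.End ℂ V := mub + delb + del + mu
    let Ft : ℤ → ℤ → Submodule ℂ V := fun p n => ⨆ i ≥ p - n, A (i, n - i)
    let F : ℤ → ℤ → Submodule ℂ V := fun p n =>
      (LinearMap.ker mub ⊓ A (p, n - p)) ⊔ ⨆ i > p, A (i, n - i)
    (∀ p n : ℤ, Ft (p + 1) n ≤ Ft p n) ∧
    (∀ p n : ℤ, (Ft p n).map d ≤ Ft p (n + 1)) ∧
    (∀ p n : ℤ, F p n = Ft (p + n) n ⊓ Submodule.comap d (Ft (p + n + 1) (n + 1))) := by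
  intro d Ft F
  have hd : ∀ x : V, d x = mub x + delb x + del x + mu x := fun x => rfl
  have memFt : ∀ (q m a b : ℤ), q - m ≤ a → b = m - a → ∀ {x : V},
      x ∈ A (a, b) → x ∈ Ft q m := by
    intro q m a b ha hb x hx
    subst hb
    exact le_iSup₂ (f := fun i (_ : i ≥ q - m) => A (i, m - i)) a ha hx
  refine ⟨fun p n => ?_, fun p n => ?_, fun p n => ?_⟩
  · exact iSup₂_le fun i hi => le_iSup₂_of_le i (by omega) le_rfl
  · show Submodule.map d (⨆ i, ⨆ (_ : i ≥ p - n), A (i, n - i)) ≤ Ft p (n + 1)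
    rw [Submodule.map_iSup]
    refine iSup_le fun i => ?_
    rw [Submodule.map_iSup]
    refine iSup_le fun hi => ?_
    rintro y ⟨x, hx, rfl⟩
    rw [hd]
    refine add_mem (add_mem (add_mem ?_ ?_) ?_) ?_
    · exact memFt p (n + 1) (i - 1) (n - i + 2) (by omega) (by ring)
        (hmub i (n - i) (Submodule.mem_map_of_mem hx))
    · exact memFt p (n + 1) i (n - i + 1) (by omega) (by ring)
        (hdelb i (n - i) (Submodule.mem_map_of_mem hx))
    · exact memFt p (n + 1) (i + 1) (n - i) (by omega) (by ring)
        (hdel i (n - i) (Submodule.mem_map_of_mem hx))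
    · exact memFt p (n + 1) (i + 2) (n - i - 1) (by omega) (by ring)
        (hmu i (n - i) (Submodule.mem_map_of_mem hx))
  · refine le_antisymm (sup_le ?_ (iSup₂_le fun i hi => ?_)) ?_
    · rintro x ⟨hk, hx⟩
      refine ⟨memFt (p + n) n p (n - p) (by omega) rfl hx, Submodule.mem_comap.mpr ?_⟩
      show d x ∈ Ft (p + n + 1) (n + 1)
      rw [hd, LinearMap.mem_ker.mp hk, zero_add]
      refine add_mem (add_mem ?_ ?_) ?_
      · exact memFt (p + n + 1) (n + 1) p (n - p + 1) (by omega) (by ring)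
          (hdelb p (n - p) (Submodule.mem_map_of_mem hx))
      · exact memFt (p + n + 1) (n + 1) (p + 1) (n - p) (by omega) (by ring)
          (hdel p (n - p) (Submodule.mem_map_of_mem hx))
      · exact memFt (p + n + 1) (n + 1) (p + 2) (n - p - 1) (by omega) (by ring)
          (hmu p (n - p) (Submodule.mem_map_of_mem hx))
    · intro x hx
      refine ⟨memFt (p + n) n i (n - i) (by omega) rfl hx, Submodule.mem_comap.mpr ?_⟩
      show d x ∈ Ft (p + n + 1) (n + 1)
      rw [hd]
      refine add_mem (add_mem (add_mem ?_ ?_) ?_) ?_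
      · exact memFt (p + n + 1) (n + 1) (i - 1) (n - i + 2) (by omega) (by ring)
          (hmub i (n - i) (Submodule.mem_map_of_mem hx))
      · exact memFt (p + n + 1) (n + 1) i (n - i + 1) (by omega) (by ring)
          (hdelb i (n - i) (Submodule.mem_map_of_mem hx))
      · exact memFt (p + n + 1) (n + 1) (i + 1) (n - i) (by omega) (by ring)
          (hdel i (n - i) (Submodule.mem_map_of_mem hx))
      · exact memFt (p + n + 1) (n + 1) (i + 2) (n - i - 1) (by omega) (by ring)
          (hmu i (n - i) (Submodule.mem_map_of_mem hx))
    · rintro x ⟨hx1, hx2⟩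
      have hdx : d x ∈ ⨆ i, ⨆ (_ : i ≥ p + n + 1 - (n + 1)), A (i, n + 1 - i) :=
        Submodule.mem_comap.mp hx2
      have hx1' : x ∈ ⨆ i, ⨆ (_ : i ≥ p + n - n), A (i, n - i) := hx1
      obtain ⟨f, hf, hsum⟩ :=
        (Submodule.mem_iSup_iff_exists_finsupp
          (fun i : ℤ => ⨆ (_ : i ≥ p + n - n), A (i, n - i)) x).mp hx1'
      have hfA : ∀ i : ℤ, p ≤ i → f i ∈ A (i, n - i) := by
        intro i hi
        have h := hf i
        rwa [iSup_pos (show i ≥ p + n - n by omega)] at h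
      have hf0 : ∀ i : ℤ, i < p → f i = 0 := by
        intro i hi
        have h := hf i
        rw [iSup_neg (show ¬ i ≥ p + n - n by omega)] at h
        simpa using h
      -- the key computation : mub (f p) = 0
      have hterm : ∀ i : ℤ,
          dsProj A hA ((p - 1 : ℤ), n - p + 2) (d (f i)) =
            if i = p then mub (f p) else 0 := by
        intro i
        rcases lt_or_ge i p with h | h
        · rw [hf0 i h, map_zero, map_zero, if_neg (by omega : ¬ i = p)]
        · have hfi := hfA i h
          have e2 : dsProj A hA ((p - 1 : ℤ), n - p + 2) (delb (f i)) = 0 :=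
            dsProj_apply_ne A hA
              (by intro h'; have := congrArg Prod.fst h'; simp at this; omega)
              (hdelb i (n - i) (Submodule.mem_map_of_mem hfi))
          have e3 : dsProj A hA ((p - 1 : ℤ), n - p + 2) (del (f i)) = 0 :=
            dsProj_apply_ne A hA
              (by intro h'; have := congrArg Prod.fst h'; simp at this; omega)
              (hdel i (n - i) (Submodule.mem_map_of_mem hfi))
          have e4 : dsProj A hA ((p - 1 : ℤ), n - p + 2) (mu (f i)) = 0 :=
            dsProj_apply_ne A hA
              (by intro h'; have := congrArg Prod.fst h'; simp at this; omega)
              (hmu i (n - i) (Submodule.mem_map_of_mem hfi))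
          rw [hd, map_add, map_add, map_add, e2, e3, e4]
          by_cases hip : i = p
          · subst hip
            rw [dsProj_apply_same A hA _ (hmub i (n - i) (Submodule.mem_map_of_mem hfi)),
              if_pos rfl]
            abel
          · rw [dsProj_apply_ne A hA
              (by intro h'; have := congrArg Prod.fst h'; simp at this; omega)
              (hmub i (n - i) (Submodule.mem_map_of_mem hfi)), if_neg hip]
            abel
      have hkey : mub (f p) = 0 := by
        have h0 : dsProj A hA ((p - 1 : ℤ), n - p + 2) (d x) = 0 :=
          dsProj_eq_zero_of_mem_biSup A hA _ (fun i : ℤ => i ≥ p + n + 1 - (n + 1))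
            (fun i : ℤ => ((i : ℤ), n + 1 - i))
            (by intro i hi h'; have := congrArg Prod.fst h'; simp at this; omega) hdx
        rw [← hsum, map_finsuppSum, map_finsuppSum] at h0
        have h1' : (f.sum fun i v => dsProj A hA ((p - 1 : ℤ), n - p + 2) (d v)) =
            if p ∈ f.support then mub (f p) else 0 := by
          rw [Finsupp.sum]
          rw [Finset.sum_congr rfl (fun i _ => hterm i)]
          exact Finset.sum_ite_eq' f.support p (fun _ => mub (f p))
        rw [h1'] at h0
        by_cases hp : p ∈ f.support
        · simpa [hp] using h0
        · rw [Finsupp.notMem_support_iff.mp hp, map_zero]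
      -- conclude
      rw [← hsum]
      refine Submodule.sum_mem _ fun i _ => ?_
      show f i ∈ F p n
      by_cases hip : i = p
      · subst hip
        exact Submodule.mem_sup_left ⟨LinearMap.mem_ker.mpr hkey, hfA i le_rfl⟩
      · rcases lt_or_ge i p with h | h
        · rw [hf0 i h]; exact zero_mem _
        · exact Submodule.mem_sup_right
            (le_iSup₂ (f := fun i (_ : i > p) => A (i, n - i)) i (by omega) (hfA i h))
end

section
/- Let (M,J,⟨·,·⟩) be an almost Hermitian 2m-manifold. For every bidegree (p,q) and every point x, conjugation composed with the Hodge star gives isomorphisms H_{μ̄,x}^{p,q} ≅ H_{μ̄,x}^{m-p,m-q} (Serre duality for pointwise μ̄-harmonic forms). -/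
/-- Serre duality for pointwise `μ̄`-harmonic forms on an almost Hermitian `2m`-manifold:
conjugation composed with the Hodge star gives a bijection
`H_{μ̄}^{p,q} ≅ H_{μ̄}^{m-p,m-q}`, where `H_{μ̄}^{p,q} = Ker μ̄ ∩ Ker μ̄* ∩ A^{p,q}` and
`μ̄* = -⋆μ⋆`. -/
theorem stmt_7 {A : Type*} [AddCommGroup A] [Module ℂ A]
    (m : ℤ) (G : ℤ × ℤ → Submodule ℂ A)
    (conjA : A →ₛₗ[starRingEnd ℂ] A)
    (hconj_invol : ∀ x : A, conjA (conjA x) = x)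
    (hconj : ∀ p q : ℤ, ∀ x ∈ G (p, q), conjA x ∈ G (q, p))
    (hodgeStar : A →ₗ[ℂ] A)
    (hstarmap : ∀ p q : ℤ, (G (p, q)).map hodgeStar ≤ G (m - q, m - p))
    (hstar2 : ∀ p q : ℤ, ∀ x ∈ G (p, q),
      hodgeStar (hodgeStar x) = ((-1 : ℂ) ^ (p + q)) • x)
    (hsc : ∀ x : A, hodgeStar (conjA x) = conjA (hodgeStar x))
    (mu mub : A →ₗ[ℂ] A)
    (hmub_conj : ∀ x : A, mub x = conjA (mu (conjA x)))
    (hmu : ∀ p q : ℤ, (G (p, q)).map mu ≤ G (p + 2, q - 1))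
    (hmubmap : ∀ p q : ℤ, (G (p, q)).map mub ≤ G (p - 1, q + 2))
    (p q : ℤ) :
    Set.BijOn (fun x => conjA (hodgeStar x))
      {x | x ∈ G (p, q) ∧ mub x = 0 ∧ hodgeStar (mu (hodgeStar x)) = 0}
      {x | x ∈ G (m - p, m - q) ∧ mub x = 0 ∧ hodgeStar (mu (hodgeStar x)) = 0} := by
  have hne : ∀ n : ℤ, ((-1 : ℂ) ^ n) ≠ 0 := fun n => zpow_ne_zero n (by norm_num)
  have hconjpow : ∀ n : ℤ, (starRingEnd ℂ) ((-1 : ℂ) ^ n) = (-1 : ℂ) ^ n := by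
    intro n
    rw [map_zpow₀, map_neg, map_one]
  -- the map sends each harmonic space to the dual one
  have hmapsto : ∀ p q : ℤ, Set.MapsTo (fun x => conjA (hodgeStar x))
      {x | x ∈ G (p, q) ∧ mub x = 0 ∧ hodgeStar (mu (hodgeStar x)) = 0}
      {x | x ∈ G (m - p, m - q) ∧ mub x = 0 ∧ hodgeStar (mu (hodgeStar x)) = 0} := by
    intro p q x hx
    obtain ⟨hxG, hmubx, hstarx⟩ := hx
    have hstarxG : hodgeStar x ∈ G (m - q, m - p) := hstarmap p q ⟨x, hxG, rfl⟩
    have hmux0 : mu (hodgeStar x) = 0 := by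
      have hmux : mu (hodgeStar x) ∈ G (m - q + 2, m - p - 1) := hmu _ _ ⟨_, hstarxG, rfl⟩
      have h2 := hstar2 _ _ _ hmux
      rw [hstarx, map_zero] at h2
      have := (smul_eq_zero.mp h2.symm).resolve_left (hne _)
      exact this
    have hmucx0 : mu (conjA x) = 0 := by
      have := congrArg conjA (hmub_conj x)
      rw [hmubx, map_zero, hconj_invol] at this
      exact this.symm
    refine ⟨hconj _ _ _ hstarxG, ?_, ?_⟩
    · rw [hmub_conj, hconj_invol, hmux0, map_zero]
    · have h1 : hodgeStar (conjA (hodgeStar x)) = ((-1 : ℂ) ^ (p + q)) • conjA x := by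
        rw [hsc, hstar2 p q x hxG, map_smulₛₗ, hconjpow]
      rw [h1, map_smul, hmucx0, smul_zero, map_zero]
  -- inverse map
  set c : ℂ := (-1 : ℂ) ^ (p + q) with hc
  have hcc : c * c = 1 := by
    rw [hc, ← mul_zpow]; norm_num
  have hstar2' : ∀ x ∈ G (m - p, m - q),
      hodgeStar (hodgeStar x) = ((-1 : ℂ) ^ (m - p + (m - q))) • x := fun x hx =>
    hstar2 _ _ x hx
  refine Set.InvOn.bijOn (f' := fun y => c • conjA (hodgeStar y)) ⟨?_, ?_⟩ (hmapsto p q) ?_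
  · -- left inverse on the source
    intro x hx
    simp only
    rw [hsc, hconj_invol, hstar2 p q x hx.1, smul_smul, hcc, one_smul]
  · -- right inverse on the target
    intro y hy
    simp only
    rw [map_smul, map_smulₛₗ, hconjpow, hsc, hconj_invol, hstar2' y hy.1, smul_smul,
      ← zpow_add₀ (show (-1:ℂ) ≠ 0 by norm_num)]
    have : p + q + (m - p + (m - q)) = 2 * m := by ring
    rw [this, zpow_mul]
    norm_num
  · -- the inverse maps the target into the source
    intro y hy
    have hfy := hmapsto (m - p) (m - q) hy
    simp only [show m - (m - p) = p by ring, show m - (m - q) = q by ring] at hfy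
    obtain ⟨h1, h2, h3⟩ := hfy
    refine ⟨Submodule.smul_mem _ _ h1, ?_, ?_⟩
    · rw [map_smul, h2, smul_zero]
    · rw [map_smul, map_smul, map_smul, h3, smul_zero]
end

section
/- Let A = ⊕ A^{p,q} be the bigraded complex of an almost Hermitian manifold with inner products on each A^{p,q}, with operators μ̄, ∂̄, ∂ satisfying μ̄² = 0, ∂̄μ̄ + μ̄∂̄ = 0, ∂̄² + μ̄∂ + ∂μ̄ = 0, and with adjoints μ̄*, ∂̄*. Then every ∂̄-μ̄-harmonic form (i.e., ω with μ̄ω = μ̄*ω = ∂̄ω = ∂̄*ω = 0) defines a nonzero class in Dolbeault cohomology unless ω = 0; i.e., the natural map H_{∂̄}^{p,q} ∩ H_{μ̄}^{p,q} → H_{Dol}^{p,q} is injective. -/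
open scoped InnerProductSpace

theorem eq_zero_of_eq_add_of_adjoint_apply_eq_zero {𝕜 E F V : Type*} [RCLike 𝕜]
    [NormedAddCommGroup E] [InnerProductSpace 𝕜 E] [NormedAddCommGroup F]
    [InnerProductSpace 𝕜 F] [NormedAddCommGroup V] [InnerProductSpace 𝕜 V]
    {f : E → V} {f' : V → E} {g : F → V} {g' : V → F}
    (hf : ∀ x y, ⟪f x, y⟫_𝕜 = ⟪x, f' y⟫_𝕜) (hg : ∀ x y, ⟪g x, y⟫_𝕜 = ⟪x, g' y⟫_𝕜)
    {ω : V} (hf' : f' ω = 0) (hg' : g' ω = 0) {α : E} {β : F} (hω : ω = f α + g β) :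
    ω = 0 := by
  have hωω : ⟪ω, ω⟫_𝕜 = 0 := by
    calc ⟪ω, ω⟫_𝕜 = ⟪f α, ω⟫_𝕜 + ⟪g β, ω⟫_𝕜 := by nth_rewrite 1 [hω]; exact inner_add_left ..
      _ = 0 := by rw [hf, hg, hf', hg', inner_zero_right, inner_zero_right, add_zero]
  exact inner_self_eq_zero.mp hωω

theorem stmt_8_general {V : Type*} [NormedAddCommGroup V] [InnerProductSpace ℂ V]
    (A : ℤ × ℤ → Submodule ℂ V)
    (mub delb mubs delbs : V →ₗ[ℂ] V)
    (hadj_mub : ∀ x y : V, (inner ℂ (mub x) y : ℂ) = inner ℂ x (mubs y))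
    (hadj_delb : ∀ x y : V, (inner ℂ (delb x) y : ℂ) = inner ℂ x (delbs y))
    (p q : ℤ) :
    ∀ ω ∈ A (p, q), mub ω = 0 → mubs ω = 0 → delb ω = 0 → delbs ω = 0 →
      ∀ α ∈ A (p + 1, q - 2), ∀ β ∈ A (p, q - 1),
        mub β = 0 → ω = mub α + delb β → ω = 0 := by
  intro ω _ _ hmubs _ hdelbs α _ β _ _ hω
  exact eq_zero_of_eq_add_of_adjoint_apply_eq_zero hadj_mub hadj_delb hmubs hdelbs hω

/-- Harmonic Inclusion: on an almost Hermitian manifold, every `∂̄`-`μ̄`-harmonic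
`(p,q)`-form (i.e. `ω` with `μ̄ω = μ̄*ω = ∂̄ω = ∂̄*ω = 0`) defines a nonzero Dolbeault
cohomology class unless `ω = 0`: if `ω = μ̄α + ∂̄β` with `μ̄β = 0`, then `ω = 0`. -/
theorem stmt_8 {V : Type*} [NormedAddCommGroup V] [InnerProductSpace ℂ V]
    (A : ℤ × ℤ → Submodule ℂ V)
    (mub delb del mubs delbs : V →ₗ[ℂ] V)
    (hmubmap : ∀ p q : ℤ, (A (p, q)).map mub ≤ A (p - 1, q + 2))
    (hdelbmap : ∀ p q : ℤ, (A (p, q)).map delb ≤ A (p, q + 1))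
    (hdelmap : ∀ p q : ℤ, (A (p, q)).map del ≤ A (p + 1, q))
    (hadj_mub : ∀ x y : V, (inner ℂ (mub x) y : ℂ) = inner ℂ x (mubs y))
    (hadj_delb : ∀ x y : V, (inner ℂ (delb x) y : ℂ) = inner ℂ x (delbs y))
    (h1 : mub ∘ₗ mub = 0)
    (h2 : delb ∘ₗ mub + mub ∘ₗ delb = 0)
    (h3 : delb ∘ₗ delb + mub ∘ₗ del + del ∘ₗ mub = 0)
    (p q : ℤ) :
    ∀ ω ∈ A (p, q), mub ω = 0 → mubs ω = 0 → delb ω = 0 → delbs ω = 0 →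
      ∀ α ∈ A (p + 1, q - 2), ∀ β ∈ A (p, q - 1),
        mub β = 0 → ω = mub α + delb β → ω = 0 :=
  stmt_8_general A mub delb mubs delbs hadj_mub hadj_delb p q
end

section
/- Let Λ(a, b, ā, b̄) be the free graded-commutative algebra on degree-1 generators with bidegrees |a| = |b| = (1,0), |ā| = |b̄| = (0,1), and differential determined as a derivation by da = dā = 0 and db = (1/2i)(āb̄) + (1/2i)(ab̄ - bā) - i aā + (1/2i)(ab), db̄ = conjugate. For this complex (dual Chevalley-Eilenberg algebra of the filiform Lie algebra with the given J), the Dolbeault cohomology H^{q}(H_μ̄^{p,*}, ∂̄) has dimensions h^{0,0} = 1, h^{1,0} = 1, h^{2,0} = 0, h^{0,1} = 2, h^{1,1} = 4, h^{2,1} = 2, h^{0,2} = 0, h^{1,2} = 1, h^{2,2} = 1. -/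
/-!
Both μ̄ and ∂̄ are antiderivations, so the Leibniz rule `d (g i * y) = d (g i) * y - g i * d y`
reduces their values on every monomial to the values on the generators. The only generator
with `μ̄ ≠ 0` is `b`, with `μ̄ b = (1/2i) ā b̄`; hence μ̄ kills `A^{p,q}` for `q ≥ 1` (every term of
`μ̄ x` then repeats `ā` or `b̄`), and its kernel is `span {a}` on `A^{1,0}` and `0` on `A^{2,0}`.
Likewise ∂̄ maps `A^{0,1}` into `span {ā b̄} = μ̄ A^{1,0}` and `A^{1,1}` into
`span {a ā b̄} = μ̄ A^{2,0}`, and kills `A^{0,2}` and everything of total degree `≥ 3`. So all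
Dolbeault cocycles and coboundaries are explicit spans of monomials, and since the increasing
monomials of a fixed degree are linearly independent (a basis of the exterior power), the
dimensions can be read off.
-/

/-- The free graded-commutative algebra `Λ(a,b,ā,b̄)` modelled as the exterior algebra on
four generators `a = g 0, b = g 1, ā = g 2, b̄ = g 3` of bidegrees `(1,0),(1,0),(0,1),(0,1)`. -/
abbrev FilAlg : Type := ExteriorAlgebra ℂ (Fin 4 → ℂ)

noncomputable def gFil (i : Fin 4) : FilAlg :=
  ExteriorAlgebra.ι ℂ (Pi.single i 1)

/-- The bigraded pieces `A^{p,q}` of `Λ(a,b,ā,b̄)`. -/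
noncomputable def AFil (p q : ℤ) : Submodule ℂ FilAlg :=
  if p = 0 ∧ q = 0 then Submodule.span ℂ {1}
  else if p = 1 ∧ q = 0 then Submodule.span ℂ {gFil 0, gFil 1}
  else if p = 0 ∧ q = 1 then Submodule.span ℂ {gFil 2, gFil 3}
  else if p = 2 ∧ q = 0 then Submodule.span ℂ {gFil 0 * gFil 1}
  else if p = 1 ∧ q = 1 then
    Submodule.span ℂ {gFil 0 * gFil 2, gFil 0 * gFil 3, gFil 1 * gFil 2, gFil 1 * gFil 3}
  else if p = 0 ∧ q = 2 then Submodule.span ℂ {gFil 2 * gFil 3}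
  else if p = 2 ∧ q = 1 then
    Submodule.span ℂ {gFil 0 * gFil 1 * gFil 2, gFil 0 * gFil 1 * gFil 3}
  else if p = 1 ∧ q = 2 then
    Submodule.span ℂ {gFil 0 * gFil 2 * gFil 3, gFil 1 * gFil 2 * gFil 3}
  else if p = 2 ∧ q = 2 then Submodule.span ℂ {gFil 0 * gFil 1 * gFil 2 * gFil 3}
  else ⊥

/-- Dolbeault cocycles: `ω ∈ A^{p,q} ∩ Ker μ̄` with `∂̄ω ∈ μ̄(A^{p+1,q-1})`. -/
noncomputable def ZFil (mub delb : FilAlg →ₗ[ℂ] FilAlg) (p q : ℤ) : Submodule ℂ FilAlg :=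
  AFil p q ⊓ LinearMap.ker mub ⊓ Submodule.comap delb ((AFil (p + 1) (q - 1)).map mub)

/-- Dolbeault coboundaries: `μ̄α + ∂̄β` with `α ∈ A^{p+1,q-2}`, `β ∈ A^{p,q-1}`, `μ̄β = 0`. -/
noncomputable def BFil (mub delb : FilAlg →ₗ[ℂ] FilAlg) (p q : ℤ) : Submodule ℂ FilAlg :=
  (AFil (p + 1) (q - 2)).map mub ⊔ ((AFil p (q - 1) ⊓ LinearMap.ker mub)).map delb

/-- Dolbeault numbers `h^{p,q} = dim H^q(H_μ̄^{p,*}, ∂̄)`. -/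
noncomputable def hFil (mub delb : FilAlg →ₗ[ℂ] FilAlg) (p q : ℤ) : ℕ :=
  Module.finrank ℂ
    (↥(ZFil mub delb p q) ⧸
      Submodule.comap (ZFil mub delb p q).subtype (BFil mub delb p q))

open Module Submodule

theorem ExteriorAlgebra.linearIndependent_ιMulti_of_strictMono {K V I ι : Type*} [Field K]
    [AddCommGroup V] [Module K V] [LinearOrder I] {v : I → V} (hv : LinearIndependent K v)
    {n : ℕ} {τ : ι → Fin n → I} (hτ : ∀ j, StrictMono (τ j)) (hinj : Function.Injective τ) :
    LinearIndependent K fun j => ιMulti K n (v ∘ τ j) := by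
  let s : ι → Set.powersetCard I n := fun j =>
    Set.powersetCard.ofFinEmbEquiv (OrderEmbedding.ofStrictMono _ (hτ j))
  have hs : Function.Injective s := fun j k h =>
    hinj (congrArg DFunLike.coe (Set.powersetCard.ofFinEmbEquiv.injective h))
  have := ((exteriorPower.ιMulti_family_linearIndependent_field (n := n) hv).map' _
    (ker_subtype _)).comp s hs
  simpa [s, exteriorPower.ιMulti_family, Function.comp_def] using this

@[simp]
theorem gFil_mul_self (i : Fin 4) : gFil i * gFil i = 0 :=
  ExteriorAlgebra.ι_sq_zero _

@[simp]
theorem gFil_mul_gFil_mul_self (i : Fin 4) (y : FilAlg) : gFil i * (gFil i * y) = 0 := by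
  rw [← mul_assoc, gFil_mul_self, zero_mul]

theorem gFil_mul_gFil_comm (i j : Fin 4) : gFil i * gFil j = -(gFil j * gFil i) :=
  eq_neg_of_add_eq_zero_left (ExteriorAlgebra.ι_add_mul_swap _ _)

theorem gFil_mul_gFil_mul_comm (i j : Fin 4) (y : FilAlg) :
    gFil i * (gFil j * y) = -(gFil j * (gFil i * y)) := by
  rw [← mul_assoc, gFil_mul_gFil_comm, neg_mul, mul_assoc]

theorem linearIndependent_gFil_prod {ι : Type*} {n : ℕ} {τ : ι → Fin n → Fin 4}
    (hτ : ∀ j, StrictMono (τ j)) (hinj : Function.Injective τ) :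
    LinearIndependent ℂ fun j => (List.ofFn fun k => gFil (τ j k)).prod := by
  simpa [ExteriorAlgebra.ιMulti_apply, gFil] using
    ExteriorAlgebra.linearIndependent_ιMulti_of_strictMono
      (Pi.linearIndependent_single_one (Fin 4) ℂ) hτ hinj

theorem gFil_prod_ne_zero {n : ℕ} {τ : Fin n → Fin 4} (hτ : StrictMono τ) :
    (List.ofFn fun k => gFil (τ k)).prod ≠ 0 :=
  (linearIndependent_gFil_prod (ι := Unit) (τ := fun _ => τ) (fun _ => hτ)
    (fun _ _ _ => rfl)).ne_zero ()

theorem finrank_eq_of_eq_span_gFil_prod {W : Submodule ℂ FilAlg} {m n : ℕ}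
    {τ : Fin m → Fin n → Fin 4}
    (hW : W = span ℂ (Set.range fun j => (List.ofFn fun k => gFil (τ j k)).prod))
    (hτ : ∀ j, StrictMono (τ j)) (hinj : Function.Injective τ) :
    finrank ℂ W = m := by
  rw [hW, finrank_span_eq_card (linearIndependent_gFil_prod hτ hinj), Fintype.card_fin]

theorem AFil_eq_bot {p q : ℤ} (h : p < 0 ∨ q < 0 ∨ 2 < p ∨ 2 < q) : AFil p q = ⊥ := by
  unfold AFil
  split_ifs <;> first | rfl | omega

instance (p q : ℤ) : FiniteDimensional ℂ (AFil p q) := by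
  refine Module.Finite.iff_fg.mpr ?_
  unfold AFil
  split_ifs <;> first | exact fg_bot | exact fg_span (Set.toFinite _)

theorem gFil_mem_AFil (i : Fin 4) : ∃ p q : ℤ, p + q = 1 ∧ gFil i ∈ AFil p q := by
  have h10 : AFil 1 0 = span ℂ {gFil 0, gFil 1} := by simp [AFil]
  have h01 : AFil 0 1 = span ℂ {gFil 2, gFil 3} := by simp [AFil]
  fin_cases i
  · exact ⟨1, 0, rfl, h10 ▸ subset_span (Set.mem_insert _ _)⟩
  · exact ⟨1, 0, rfl, h10 ▸ subset_span (Set.mem_insert_of_mem _ rfl)⟩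
  · exact ⟨0, 1, rfl, h01 ▸ subset_span (Set.mem_insert _ _)⟩
  · exact ⟨0, 1, rfl, h01 ▸ subset_span (Set.mem_insert_of_mem _ rfl)⟩

theorem finrank_AFil_zero_zero : finrank ℂ (AFil 0 0) = 1 :=
  finrank_eq_of_eq_span_gFil_prod (τ := ![![]])
    (by simp [AFil]) (by unfold StrictMono; decide) (by decide)

theorem finrank_AFil_zero_one : finrank ℂ (AFil 0 1) = 2 :=
  finrank_eq_of_eq_span_gFil_prod (τ := ![![2], ![3]])
    (by simp [AFil]; congr 1; ext x; simp [Fin.exists_fin_succ, eq_comm])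
    (by unfold StrictMono; decide) (by decide)

theorem finrank_AFil_one_one : finrank ℂ (AFil 1 1) = 4 :=
  finrank_eq_of_eq_span_gFil_prod (τ := ![![0, 2], ![0, 3], ![1, 2], ![1, 3]])
    (by simp [AFil]; congr 1; ext x; simp [Fin.exists_fin_succ, eq_comm])
    (by unfold StrictMono; decide) (by decide)

theorem finrank_AFil_two_one : finrank ℂ (AFil 2 1) = 2 :=
  finrank_eq_of_eq_span_gFil_prod (τ := ![![0, 1, 2], ![0, 1, 3]])
    (by simp [AFil]; congr 1; ext x; simp [Fin.exists_fin_succ, mul_assoc, eq_comm])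
    (by unfold StrictMono; decide) (by decide)

theorem finrank_AFil_one_two : finrank ℂ (AFil 1 2) = 2 :=
  finrank_eq_of_eq_span_gFil_prod (τ := ![![0, 2, 3], ![1, 2, 3]])
    (by simp [AFil]; congr 1; ext x; simp [Fin.exists_fin_succ, mul_assoc, eq_comm])
    (by unfold StrictMono; decide) (by decide)

theorem finrank_AFil_two_two : finrank ℂ (AFil 2 2) = 1 :=
  finrank_eq_of_eq_span_gFil_prod (τ := ![![0, 1, 2, 3]])
    (by simp [AFil]; congr 1; ext x; simp [mul_assoc])
    (by unfold StrictMono; decide) (by decide)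

theorem finrank_span_gFil_zero : finrank ℂ (span ℂ {gFil 0}) = 1 :=
  finrank_eq_of_eq_span_gFil_prod (τ := ![![0]])
    (by congr 1; ext x; simp) (by unfold StrictMono; decide) (by decide)

theorem finrank_span_gFil_zero_mul_gFil_two_mul_gFil_three :
    finrank ℂ (span ℂ {gFil 0 * gFil 2 * gFil 3}) = 1 :=
  finrank_eq_of_eq_span_gFil_prod (τ := ![![0, 2, 3]])
    (by congr 1; ext x; simp [mul_assoc]) (by unfold StrictMono; decide) (by decide)

def IsAntiderivation (d : FilAlg →ₗ[ℂ] FilAlg) : Prop :=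
  ∀ p q : ℤ, ∀ x ∈ AFil p q, ∀ y : FilAlg,
    d (x * y) = d x * y + ((-1 : ℂ) ^ (p + q)) • (x * d y)

namespace IsAntiderivation

variable {d : FilAlg →ₗ[ℂ] FilAlg}

theorem map_one (hd : IsAntiderivation d) : d 1 = 0 := by
  simpa using hd 0 0 1 (by simp [AFil]) 1

theorem AFil_zero_zero_le_ker (hd : IsAntiderivation d) : AFil 0 0 ≤ LinearMap.ker d := by
  simp [AFil, hd.map_one]

theorem map_gFil_mul (hd : IsAntiderivation d) (i : Fin 4) (y : FilAlg) :
    d (gFil i * y) = d (gFil i) * y - gFil i * d y := by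
  obtain ⟨p, q, hpq, hi⟩ := gFil_mem_AFil i
  rw [hd p q _ hi, hpq]
  simp [sub_eq_add_neg]

end IsAntiderivation

structure IsFiliformMuBar (mub : FilAlg →ₗ[ℂ] FilAlg) : Prop where
  isAntiderivation : IsAntiderivation mub
  map_gFil_zero : mub (gFil 0) = 0
  map_gFil_one : mub (gFil 1) = (1 / (2 * Complex.I)) • (gFil 2 * gFil 3)
  map_gFil_two : mub (gFil 2) = 0
  map_gFil_three : mub (gFil 3) = 0

structure IsFiliformDelBar (delb : FilAlg →ₗ[ℂ] FilAlg) : Prop where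
  isAntiderivation : IsAntiderivation delb
  map_gFil_zero : delb (gFil 0) = 0
  map_gFil_one : delb (gFil 1) =
    (1 / (2 * Complex.I)) • (gFil 0 * gFil 3 - gFil 1 * gFil 2) - Complex.I • (gFil 0 * gFil 2)
  map_gFil_two : delb (gFil 2) = 0
  map_gFil_three : delb (gFil 3) = (-(1 / (2 * Complex.I))) • (gFil 2 * gFil 3)

namespace IsFiliformMuBar

variable {mub : FilAlg →ₗ[ℂ] FilAlg}

theorem AFil_le_ker (hμ : IsFiliformMuBar mub) {p q : ℤ} (hq : 1 ≤ q) :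
    AFil p q ≤ LinearMap.ker mub := by
  unfold AFil
  split_ifs <;> try (exfalso; omega)
  on_goal -1 => exact bot_le
  all_goals
    simp [span_le, Set.insert_subset_iff, mul_assoc, hμ.isAntiderivation.map_gFil_mul,
      hμ.map_gFil_zero, hμ.map_gFil_one, hμ.map_gFil_two, hμ.map_gFil_three,
      gFil_mul_gFil_comm 3 2, gFil_mul_gFil_mul_comm 3 2]

theorem map_gFil_zero_mul_gFil_one (hμ : IsFiliformMuBar mub) :
    mub (gFil 0 * gFil 1) = (-(1 / (2 * Complex.I))) • (gFil 0 * gFil 2 * gFil 3) := by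
  simp [hμ.isAntiderivation.map_gFil_mul, hμ.map_gFil_zero, hμ.map_gFil_one, mul_assoc]

theorem map_AFil_one_zero (hμ : IsFiliformMuBar mub) :
    (AFil 1 0).map mub = span ℂ {gFil 2 * gFil 3} := by
  have hA : AFil 1 0 = span ℂ {gFil 0, gFil 1} := by simp [AFil]
  rw [hA, map_span, Set.image_pair, hμ.map_gFil_zero, hμ.map_gFil_one, span_insert_zero,
    span_singleton_smul_eq (by simp)]

theorem map_AFil_two_zero (hμ : IsFiliformMuBar mub) :
    (AFil 2 0).map mub = span ℂ {gFil 0 * gFil 2 * gFil 3} := by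
  have hA : AFil 2 0 = span ℂ {gFil 0 * gFil 1} := by simp [AFil]
  rw [hA, map_span, Set.image_singleton, hμ.map_gFil_zero_mul_gFil_one,
    span_singleton_smul_eq (by simp)]

theorem AFil_one_zero_inf_ker (hμ : IsFiliformMuBar mub) :
    AFil 1 0 ⊓ LinearMap.ker mub = span ℂ {gFil 0} := by
  have hA : AFil 1 0 = span ℂ {gFil 0, gFil 1} := by simp [AFil]
  have h23 : gFil 2 * gFil 3 ≠ 0 := by
    simpa [List.ofFn_succ] using gFil_prod_ne_zero (τ := ![2, 3]) (by unfold StrictMono; decide)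
  apply le_antisymm
  · intro x hx
    rw [mem_inf, hA, mem_span_pair, LinearMap.mem_ker] at hx
    obtain ⟨⟨α, β, rfl⟩, hker⟩ := hx
    have hβ : β = 0 := by simpa [hμ.map_gFil_zero, hμ.map_gFil_one, h23] using hker
    simpa [hβ] using smul_mem _ α (mem_span_singleton_self (gFil 0))
  · rw [span_le, Set.singleton_subset_iff]
    exact ⟨hA ▸ subset_span (Set.mem_insert _ _), hμ.map_gFil_zero⟩

theorem AFil_two_zero_inf_ker (hμ : IsFiliformMuBar mub) :
    AFil 2 0 ⊓ LinearMap.ker mub = ⊥ := by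
  have hA : AFil 2 0 = span ℂ {gFil 0 * gFil 1} := by simp [AFil]
  have h023 : gFil 0 * gFil 2 * gFil 3 ≠ 0 := by
    simpa [List.ofFn_succ, mul_assoc] using
      gFil_prod_ne_zero (τ := ![0, 2, 3]) (by unfold StrictMono; decide)
  rw [eq_bot_iff]
  intro x hx
  rw [mem_inf, hA, mem_span_singleton, LinearMap.mem_ker] at hx
  obtain ⟨⟨γ, rfl⟩, hker⟩ := hx
  have hγ : γ = 0 := by simpa [hμ.map_gFil_zero_mul_gFil_one, h023] using hker
  simp [hγ]

end IsFiliformMuBar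

namespace IsFiliformDelBar

variable {delb : FilAlg →ₗ[ℂ] FilAlg}

theorem AFil_le_ker (hδ : IsFiliformDelBar delb) {p q : ℤ} (h : 3 ≤ p + q ∨ (p = 0 ∧ q = 2)) :
    AFil p q ≤ LinearMap.ker delb := by
  unfold AFil
  split_ifs <;> try (exfalso; omega)
  on_goal -1 => exact bot_le
  all_goals
    simp [span_le, Set.insert_subset_iff, mul_assoc, sub_mul,
      hδ.isAntiderivation.map_gFil_mul, hδ.map_gFil_zero, hδ.map_gFil_one, hδ.map_gFil_two,
      hδ.map_gFil_three, gFil_mul_gFil_comm 3 2, gFil_mul_gFil_mul_comm 3 2]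

theorem map_AFil_zero_one_le (hδ : IsFiliformDelBar delb) :
    (AFil 0 1).map delb ≤ span ℂ {gFil 2 * gFil 3} := by
  simp [AFil, map_span, span_le, Set.image_pair, hδ.map_gFil_two, hδ.map_gFil_three,
    smul_mem _ _ (mem_span_singleton_self _)]

theorem map_AFil_one_one_le (hδ : IsFiliformDelBar delb) :
    (AFil 1 1).map delb ≤ span ℂ {gFil 0 * gFil 2 * gFil 3} := by
  simp [AFil, map_span, span_le, Set.image_insert_eq, Set.insert_subset_iff, mul_assoc,
    sub_mul, hδ.isAntiderivation.map_gFil_mul, hδ.map_gFil_zero, hδ.map_gFil_one,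
    hδ.map_gFil_two, hδ.map_gFil_three, gFil_mul_gFil_comm 3 2, smul_mem,
    mem_span_singleton_self]

end IsFiliformDelBar

section Cohomology

variable {mub delb : FilAlg →ₗ[ℂ] FilAlg}

instance (p q : ℤ) : FiniteDimensional ℂ (ZFil mub delb p q) :=
  Submodule.finiteDimensional_of_le (inf_le_left.trans inf_le_left : ZFil mub delb p q ≤ AFil p q)

theorem hFil_eq_finrank_sub {p q : ℤ} (h : BFil mub delb p q ≤ ZFil mub delb p q) :
    hFil mub delb p q = finrank ℂ (ZFil mub delb p q) - finrank ℂ (BFil mub delb p q) := by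
  have := Submodule.finrank_quotient_add_finrank (comap (ZFil mub delb p q).subtype
    (BFil mub delb p q))
  rw [hFil, ← (comapSubtypeEquivOfLe h).finrank_eq]
  omega

theorem hFil_eq_finrank_of_BFil_eq_bot {p q : ℤ} (h : BFil mub delb p q = ⊥) :
    hFil mub delb p q = finrank ℂ (ZFil mub delb p q) := by
  rw [hFil_eq_finrank_sub (h ▸ bot_le), h, finrank_bot, Nat.sub_zero]

theorem ZFil_eq_AFil {p q : ℤ} (hμ : AFil p q ≤ LinearMap.ker mub)
    (hδ : AFil p q ≤ ((AFil (p + 1) (q - 1)).map mub).comap delb) :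
    ZFil mub delb p q = AFil p q := by
  rw [ZFil, inf_eq_left.2 hμ, inf_eq_left.2 hδ]

theorem BFil_eq_bot {p q : ℤ} (hμ : AFil (p + 1) (q - 2) = ⊥)
    (hδ : AFil p (q - 1) ⊓ LinearMap.ker mub ≤ LinearMap.ker delb) :
    BFil mub delb p q = ⊥ := by
  rw [BFil, hμ, Submodule.map_bot, bot_sup_eq, ← LinearMap.le_ker_iff_map]
  exact hδ

theorem BFil_zero_eq_bot (p : ℤ) : BFil mub delb p 0 = ⊥ :=
  BFil_eq_bot (AFil_eq_bot (by omega)) (by rw [AFil_eq_bot (by omega), bot_inf_eq]; exact bot_le)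

end Cohomology

section Filiform

variable {mub delb : FilAlg →ₗ[ℂ] FilAlg}

theorem hFil_zero_zero (hμ : IsFiliformMuBar mub) (hδ : IsFiliformDelBar delb) :
    hFil mub delb 0 0 = 1 := by
  rw [hFil_eq_finrank_of_BFil_eq_bot (BFil_zero_eq_bot 0),
    ZFil_eq_AFil hμ.isAntiderivation.AFil_zero_zero_le_ker
      (hδ.isAntiderivation.AFil_zero_zero_le_ker.trans (LinearMap.ker_le_comap _)),
    finrank_AFil_zero_zero]

theorem hFil_one_zero (hμ : IsFiliformMuBar mub) (hδ : IsFiliformDelBar delb) :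
    hFil mub delb 1 0 = 1 := by
  have hZ : ZFil mub delb 1 0 = span ℂ {gFil 0} := by
    rw [ZFil, hμ.AFil_one_zero_inf_ker, inf_eq_left, span_le, Set.singleton_subset_iff,
      SetLike.mem_coe, mem_comap, hδ.map_gFil_zero]
    exact zero_mem _
  rw [hFil_eq_finrank_of_BFil_eq_bot (BFil_zero_eq_bot 1), hZ, finrank_span_gFil_zero]

theorem hFil_two_zero (hμ : IsFiliformMuBar mub) : hFil mub delb 2 0 = 0 := by
  rw [hFil_eq_finrank_of_BFil_eq_bot (BFil_zero_eq_bot 2), ZFil, hμ.AFil_two_zero_inf_ker,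
    bot_inf_eq, finrank_bot]

theorem hFil_zero_one (hμ : IsFiliformMuBar mub) (hδ : IsFiliformDelBar delb) :
    hFil mub delb 0 1 = 2 := by
  have hB : BFil mub delb 0 1 = ⊥ :=
    BFil_eq_bot (AFil_eq_bot (by norm_num))
      (inf_le_left.trans hδ.isAntiderivation.AFil_zero_zero_le_ker)
  have hZ : ZFil mub delb 0 1 = AFil 0 1 :=
    ZFil_eq_AFil (hμ.AFil_le_ker le_rfl)
      (map_le_iff_le_comap.1 (hδ.map_AFil_zero_one_le.trans_eq hμ.map_AFil_one_zero.symm))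
  rw [hFil_eq_finrank_of_BFil_eq_bot hB, hZ, finrank_AFil_zero_one]

theorem hFil_one_one (hμ : IsFiliformMuBar mub) (hδ : IsFiliformDelBar delb) :
    hFil mub delb 1 1 = 4 := by
  have hB : BFil mub delb 1 1 = ⊥ := by
    refine BFil_eq_bot (AFil_eq_bot (by norm_num)) ?_
    rw [Int.sub_self, hμ.AFil_one_zero_inf_ker, span_le, Set.singleton_subset_iff]
    exact hδ.map_gFil_zero
  have hZ : ZFil mub delb 1 1 = AFil 1 1 :=
    ZFil_eq_AFil (hμ.AFil_le_ker le_rfl)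
      (map_le_iff_le_comap.1 (hδ.map_AFil_one_one_le.trans_eq hμ.map_AFil_two_zero.symm))
  rw [hFil_eq_finrank_of_BFil_eq_bot hB, hZ, finrank_AFil_one_one]

theorem hFil_two_one (hμ : IsFiliformMuBar mub) (hδ : IsFiliformDelBar delb) :
    hFil mub delb 2 1 = 2 := by
  have hB : BFil mub delb 2 1 = ⊥ :=
    BFil_eq_bot (AFil_eq_bot (by norm_num)) (hμ.AFil_two_zero_inf_ker ▸ bot_le)
  have hZ : ZFil mub delb 2 1 = AFil 2 1 :=
    ZFil_eq_AFil (hμ.AFil_le_ker le_rfl)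
      ((hδ.AFil_le_ker (by norm_num)).trans (LinearMap.ker_le_comap _))
  rw [hFil_eq_finrank_of_BFil_eq_bot hB, hZ, finrank_AFil_two_one]

theorem hFil_zero_two (hμ : IsFiliformMuBar mub) (hδ : IsFiliformDelBar delb) :
    hFil mub delb 0 2 = 0 := by
  have hZ : ZFil mub delb 0 2 = AFil 0 2 :=
    ZFil_eq_AFil (hμ.AFil_le_ker (by norm_num))
      ((hδ.AFil_le_ker (by norm_num)).trans (LinearMap.ker_le_comap _))
  have hB : BFil mub delb 0 2 = AFil 0 2 := by
    have hA : AFil 0 2 = span ℂ {gFil 2 * gFil 3} := by simp [AFil]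
    simp only [BFil, Int.reduceAdd, Int.reduceSub, hμ.map_AFil_one_zero, hA]
    exact sup_eq_left.2 ((map_mono inf_le_left).trans hδ.map_AFil_zero_one_le)
  rw [hFil_eq_finrank_sub (hB.trans hZ.symm).le, hB, hZ, Nat.sub_self]

theorem hFil_one_two (hμ : IsFiliformMuBar mub) (hδ : IsFiliformDelBar delb) :
    hFil mub delb 1 2 = 1 := by
  have hZ : ZFil mub delb 1 2 = AFil 1 2 :=
    ZFil_eq_AFil (hμ.AFil_le_ker (by norm_num))
      ((hδ.AFil_le_ker (by norm_num)).trans (LinearMap.ker_le_comap _))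
  have hB : BFil mub delb 1 2 = span ℂ {gFil 0 * gFil 2 * gFil 3} := by
    simp only [BFil, Int.reduceAdd, Int.reduceSub, hμ.map_AFil_two_zero]
    exact sup_eq_left.2 ((map_mono inf_le_left).trans hδ.map_AFil_one_one_le)
  have hBZ : BFil mub delb 1 2 ≤ ZFil mub delb 1 2 := by
    have hA : AFil 1 2 = span ℂ {gFil 0 * gFil 2 * gFil 3, gFil 1 * gFil 2 * gFil 3} := by
      simp [AFil]
    rw [hB, hZ, hA]
    exact span_mono (Set.singleton_subset_iff.2 (Set.mem_insert _ _))
  rw [hFil_eq_finrank_sub hBZ, hZ, hB, finrank_AFil_one_two,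
    finrank_span_gFil_zero_mul_gFil_two_mul_gFil_three]

theorem hFil_two_two (hμ : IsFiliformMuBar mub) (hδ : IsFiliformDelBar delb) :
    hFil mub delb 2 2 = 1 := by
  have hB : BFil mub delb 2 2 = ⊥ :=
    BFil_eq_bot (AFil_eq_bot (by norm_num)) (inf_le_left.trans (hδ.AFil_le_ker (by norm_num)))
  have hZ : ZFil mub delb 2 2 = AFil 2 2 :=
    ZFil_eq_AFil (hμ.AFil_le_ker (by norm_num))
      ((hδ.AFil_le_ker (by norm_num)).trans (LinearMap.ker_le_comap _))
  rw [hFil_eq_finrank_of_BFil_eq_bot hB, hZ, finrank_AFil_two_two]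

end Filiform

/-- For the dual Chevalley–Eilenberg algebra of the filiform Lie algebra with its
non-integrable `J` (so `μ̄b = (1/2i)āb̄`, `∂̄b = (1/2i)(ab̄ - bā) - i aā`,
`∂̄b̄ = -(1/2i)āb̄`, and `a, ā` closed), the Dolbeault cohomology has dimensions
`h^{0,0}=1, h^{1,0}=1, h^{2,0}=0, h^{0,1}=2, h^{1,1}=4, h^{2,1}=2, h^{0,2}=0,
h^{1,2}=1, h^{2,2}=1`. -/
theorem stmt_13 (mub delb : FilAlg →ₗ[ℂ] FilAlg)
    (hmub_deriv : ∀ p q : ℤ, ∀ x ∈ AFil p q, ∀ y : FilAlg,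
      mub (x * y) = mub x * y + ((-1 : ℂ) ^ (p + q)) • (x * mub y))
    (hdelb_deriv : ∀ p q : ℤ, ∀ x ∈ AFil p q, ∀ y : FilAlg,
      delb (x * y) = delb x * y + ((-1 : ℂ) ^ (p + q)) • (x * delb y))
    (hmub0 : mub (gFil 0) = 0)
    (hmub1 : mub (gFil 1) = (1 / (2 * Complex.I)) • (gFil 2 * gFil 3))
    (hmub2 : mub (gFil 2) = 0)
    (hmub3 : mub (gFil 3) = 0)
    (hdelb0 : delb (gFil 0) = 0)
    (hdelb1 : delb (gFil 1) =
      (1 / (2 * Complex.I)) • (gFil 0 * gFil 3 - gFil 1 * gFil 2)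
        - Complex.I • (gFil 0 * gFil 2))
    (hdelb2 : delb (gFil 2) = 0)
    (hdelb3 : delb (gFil 3) = (-(1 / (2 * Complex.I))) • (gFil 2 * gFil 3)) :
    hFil mub delb 0 0 = 1 ∧ hFil mub delb 1 0 = 1 ∧ hFil mub delb 2 0 = 0 ∧
    hFil mub delb 0 1 = 2 ∧ hFil mub delb 1 1 = 4 ∧ hFil mub delb 2 1 = 2 ∧
    hFil mub delb 0 2 = 0 ∧ hFil mub delb 1 2 = 1 ∧ hFil mub delb 2 2 = 1 := by
  have hμ : IsFiliformMuBar mub := ⟨hmub_deriv, hmub0, hmub1, hmub2, hmub3⟩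
  have hδ : IsFiliformDelBar delb := ⟨hdelb_deriv, hdelb0, hdelb1, hdelb2, hdelb3⟩
  exact ⟨hFil_zero_zero hμ hδ, hFil_one_zero hμ hδ, hFil_two_zero hμ, hFil_zero_one hμ hδ,
    hFil_one_one hμ hδ, hFil_two_one hμ hδ, hFil_zero_two hμ hδ, hFil_one_two hμ hδ,
    hFil_two_two hμ hδ⟩
end

section
/- Let V, W be 2-dimensional complex vector spaces with bases ξ₁,ξ₂ and ξ̄₁,ξ̄₂, and A^{p,q} = Λ^p V ⊗ Λ^q W. Suppose μ̄ is a bidegree (-1,2) derivation on Λ(V ⊕ W) vanishing on W with μ̄² = 0 such that μ̄: A^{1,0} → A^{0,2} is surjective and μ̄: A^{2,0} → A^{1,2} is injective. Then the μ̄-cohomology dimensions are: h^{0,0}=1, h^{1,0}=1, h^{2,0}=0, h^{0,1}=2, h^{1,1}=4, h^{2,1}=2, h^{0,2}=0, h^{1,2}=1, h^{2,2}=1. -/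
/-!
Since `μ̄` has bidegree `(-1, 2)` and `A^{p,q} = 0` unless `0 ≤ p, q ≤ 2`, the only pieces on
which `μ̄` can act nontrivially are `A^{1,0} → A^{0,2}` and `A^{2,0} → A^{1,2}`. Every other entry
of the table is therefore `dim A^{p,q} = C(2,p) C(2,q)`, counted with the monomial basis of the
exterior algebra, and the four remaining entries follow from rank–nullity applied to the
surjection `A^{1,0} → A^{0,2}` and the injection `A^{2,0} → A^{1,2}`.
-/

/-- `Λ(V ⊕ W)` for `V, W` of dimension 2, modelled as the exterior algebra on four
generators: `ξᵢ = g4 i` for `i < 2` span `V` and `ξ̄ᵢ = g4 (i+2)` span `W`. -/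
abbrev Ext4 : Type := ExteriorAlgebra ℂ (Fin 4 → ℂ)

noncomputable def g4 (i : Fin 4) : Ext4 :=
  ExteriorAlgebra.ι ℂ (Pi.single i 1)

/-- The bigraded piece `A^{p,q} = Λ^p V ⊗ Λ^q W`. -/
noncomputable def A4 (p q : ℤ) : Submodule ℂ Ext4 :=
  Submodule.span ℂ {x | ∃ s : Finset (Fin 4),
    (((s.filter (fun i : Fin 4 => (i : ℕ) < 2)).card : ℤ) = p) ∧
    (((s.filter (fun i : Fin 4 => 2 ≤ (i : ℕ))).card : ℤ) = q) ∧
    x = ((s.sort (· ≤ ·)).map g4).prod}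

/-- `μ̄`-cohomology dimensions `h^{p,q} = dim (Ker μ̄ ∩ A^{p,q}) / μ̄(A^{p+1,q-2})`. -/
noncomputable def h4 (mub : Ext4 →ₗ[ℂ] Ext4) (p q : ℤ) : ℕ :=
  Module.finrank ℂ
    (↥(LinearMap.ker mub ⊓ A4 p q) ⧸
      Submodule.comap (LinearMap.ker mub ⊓ A4 p q).subtype
        ((A4 (p + 1) (q - 2)).map mub))

open Module ExteriorAlgebra

section LinearAlgebra

variable {K V W : Type*} [Field K] [AddCommGroup V] [Module K V] [AddCommGroup W] [Module K W]
  [FiniteDimensional K V]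

theorem Submodule.finrank_ker_inf_add_finrank_map (f : V →ₗ[K] W) (U : Submodule K V) :
    finrank K ↥(LinearMap.ker f ⊓ U) + finrank K ↥(U.map f) = finrank K U := by
  have hker : (LinearMap.ker (f.domRestrict U)).map U.subtype = LinearMap.ker f ⊓ U := by
    rw [LinearMap.ker_domRestrict, Submodule.map_comap_subtype, inf_comm]
  rw [← hker, ← (Submodule.equivMapOfInjective _ U.injective_subtype _).finrank_eq,
    ← LinearMap.range_domRestrict, add_comm]
  exact LinearMap.finrank_range_add_finrank_ker _

theorem Submodule.finrank_quotient_comap_subtype_add_finrank {N I : Submodule K V} (h : I ≤ N) :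
    finrank K (N ⧸ I.comap N.subtype) + finrank K I = finrank K N := by
  rw [← (Submodule.comapSubtypeEquivOfLe h).finrank_eq]
  exact Submodule.finrank_quotient_add_finrank _

end LinearAlgebra

noncomputable abbrev ext4Basis : Basis (Finset (Fin 4)) ℂ Ext4 :=
  (Pi.basisFun ℂ (Fin 4)).ExteriorAlgebra

instance : FiniteDimensional ℂ Ext4 := .of_basis ext4Basis

theorem ext4Basis_apply (s : Finset (Fin 4)) :
    ext4Basis s = ((s.sort (· ≤ ·)).map g4).prod := by
  rw [basis_apply_ofCard _ rfl, ιMulti_family, ιMulti_apply]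
  congr 1
  apply List.ext_getElem
  · simp
  · intro n _ _
    simp [g4, Set.powersetCard.ofFinEmbEquiv_symm_apply, Finset.orderEmbOfFin_apply]

def monomialsOfBidegree (p q : ℤ) : Finset (Finset (Fin 4)) :=
  {s | ((s.filter (fun i : Fin 4 => (i : ℕ) < 2)).card : ℤ) = p ∧
    ((s.filter (fun i : Fin 4 => 2 ≤ (i : ℕ))).card : ℤ) = q}

theorem A4_eq_span (p q : ℤ) :
    A4 p q = Submodule.span ℂ (ext4Basis '' monomialsOfBidegree p q) := by
  simp [A4, monomialsOfBidegree, ext4Basis_apply, Set.image, and_assoc, eq_comm]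

theorem finrank_A4 (p q : ℤ) : finrank ℂ (A4 p q) = (monomialsOfBidegree p q).card := by
  rw [A4_eq_span, Set.image_eq_range]
  exact (finrank_span_eq_card (ext4Basis.linearIndependent.comp _ Subtype.val_injective)).trans
    (Fintype.card_coe _)

theorem A4_eq_bot {p q : ℤ} (h : monomialsOfBidegree p q = ∅) : A4 p q = ⊥ := by
  simp [A4_eq_span, h]

section Cohomology

variable (mub : Ext4 →ₗ[ℂ] Ext4)

theorem h4_eq_finrank_ker_inf {p q : ℤ} (h : A4 (p + 1) (q - 2) = ⊥) :
    h4 mub p q = finrank ℂ ↥(LinearMap.ker mub ⊓ A4 p q) := by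
  rw [h4, h, Submodule.map_bot, Submodule.comap_bot, Submodule.ker_subtype]
  exact (Submodule.quotEquivOfEqBot _ rfl).finrank_eq

variable {mub} (hmap : ∀ p q : ℤ, (A4 p q).map mub ≤ A4 (p - 1) (q + 2))
include hmap

theorem ker_inf_A4_eq_A4 {p q : ℤ} (h : A4 (p - 1) (q + 2) = ⊥) :
    LinearMap.ker mub ⊓ A4 p q = A4 p q := by
  refine inf_eq_right.mpr fun x hx => ?_
  simpa [h] using hmap p q (Submodule.mem_map_of_mem hx)

theorem h4_eq_finrank_A4 {p q : ℤ} (hin : A4 (p + 1) (q - 2) = ⊥)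
    (hout : A4 (p - 1) (q + 2) = ⊥) : h4 mub p q = finrank ℂ (A4 p q) := by
  rw [h4_eq_finrank_ker_inf mub hin, ker_inf_A4_eq_A4 hmap hout]

theorem h4_add_finrank_map (hsq : mub ∘ₗ mub = 0) (p q : ℤ) :
    h4 mub p q + finrank ℂ ↥((A4 (p + 1) (q - 2)).map mub)
      = finrank ℂ ↥(LinearMap.ker mub ⊓ A4 p q) := by
  refine Submodule.finrank_quotient_comap_subtype_add_finrank ?_
  rintro _ ⟨x, hx, rfl⟩
  refine ⟨by simpa using LinearMap.congr_fun hsq x, ?_⟩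
  simpa using hmap (p + 1) (q - 2) (Submodule.mem_map_of_mem hx)

end Cohomology

theorem stmt_17_general (mub : Ext4 →ₗ[ℂ] Ext4)
    (hmap : ∀ p q : ℤ, (A4 p q).map mub ≤ A4 (p - 1) (q + 2))
    (hsq : mub ∘ₗ mub = 0)
    (hsurj10 : (A4 1 0).map mub = A4 0 2)
    (hinj20 : ∀ x ∈ A4 2 0, mub x = 0 → x = 0) :
    (h4 mub 0 0 = 1 ∧ h4 mub 1 0 = 1 ∧ h4 mub 2 0 = 0) ∧
    (h4 mub 0 1 = 2 ∧ h4 mub 1 1 = 4 ∧ h4 mub 2 1 = 2) ∧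
    (h4 mub 0 2 = 0 ∧ h4 mub 1 2 = 1 ∧ h4 mub 2 2 = 1) := by
  -- The default arguments are discharged by `decide`, enumerating the subsets of `Fin 4`.
  have bot {p q : ℤ} (h : monomialsOfBidegree p q = ∅ := by decide) : A4 p q = ⊥ := A4_eq_bot h
  have closed {p q : ℤ} {n : ℕ} (h1 : monomialsOfBidegree (p + 1) (q - 2) = ∅ := by decide)
      (h2 : monomialsOfBidegree (p - 1) (q + 2) = ∅ := by decide)
      (h3 : (monomialsOfBidegree p q).card = n := by decide) : h4 mub p q = n := by
    rw [h4_eq_finrank_A4 hmap (bot h1) (bot h2), finrank_A4, h3]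
  have dims : finrank ℂ (A4 1 0) = 2 ∧ finrank ℂ (A4 0 2) = 1 ∧
      finrank ℂ (A4 2 0) = 1 ∧ finrank ℂ (A4 1 2) = 2 := by
    simp only [finrank_A4]; decide
  have ker20 : LinearMap.ker mub ⊓ A4 2 0 = ⊥ := by
    rw [inf_comm, ← disjoint_iff]
    exact LinearMap.disjoint_ker.mpr hinj20
  have rank10 := Submodule.finrank_ker_inf_add_finrank_map mub (A4 1 0)
  have rank20 := Submodule.finrank_ker_inf_add_finrank_map mub (A4 2 0)
  have h02 : h4 mub 0 2 + finrank ℂ ↥((A4 1 0).map mub) =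
      finrank ℂ ↥(LinearMap.ker mub ⊓ A4 0 2) := h4_add_finrank_map hmap hsq 0 2
  have h12 : h4 mub 1 2 + finrank ℂ ↥((A4 2 0).map mub) =
      finrank ℂ ↥(LinearMap.ker mub ⊓ A4 1 2) := h4_add_finrank_map hmap hsq 1 2
  rw [hsurj10] at rank10 h02
  rw [ker20, finrank_bot] at rank20
  rw [ker_inf_A4_eq_A4 hmap bot] at h02 h12
  refine ⟨⟨closed, ?_, ?_⟩, ⟨closed, closed, closed⟩, ⟨by omega, by omega, closed⟩⟩
  · rw [h4_eq_finrank_ker_inf mub bot]; omega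
  · rw [h4_eq_finrank_ker_inf mub bot, ker20, finrank_bot]

/-- If `μ̄` is a bidegree `(-1,2)` derivation with `μ̄² = 0` on `Λ(V ⊕ W)` (`V`, `W` of
dimension 2) vanishing on `W`, with `μ̄ : A^{1,0} → A^{0,2}` surjective and
`μ̄ : A^{2,0} → A^{1,2}` injective (the maximally non-integrable condition in dimension 4),
then the `μ̄`-cohomology has the dimension table `1,1,0 / 2,4,2 / 0,1,1`. -/
theorem stmt_17 (mub : Ext4 →ₗ[ℂ] Ext4)
    (hderiv : ∀ p q : ℤ, ∀ x ∈ A4 p q, ∀ y : Ext4,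
      mub (x * y) = mub x * y + ((-1 : ℂ) ^ (p + q)) • (x * mub y))
    (hmap : ∀ p q : ℤ, (A4 p q).map mub ≤ A4 (p - 1) (q + 2))
    (hsq : mub ∘ₗ mub = 0)
    (hW2 : mub (g4 2) = 0) (hW3 : mub (g4 3) = 0)
    (hsurj10 : (A4 1 0).map mub = A4 0 2)
    (hinj20 : ∀ x ∈ A4 2 0, mub x = 0 → x = 0) :
    (h4 mub 0 0 = 1 ∧ h4 mub 1 0 = 1 ∧ h4 mub 2 0 = 0) ∧
    (h4 mub 0 1 = 2 ∧ h4 mub 1 1 = 4 ∧ h4 mub 2 1 = 2) ∧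
    (h4 mub 0 2 = 0 ∧ h4 mub 1 2 = 1 ∧ h4 mub 2 2 = 1) :=
  stmt_17_general mub hmap hsq hsurj10 hinj20
end
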